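/- arXiv:1609.00453 — 5 statements merged into one kernel-verified Lean document; each statement's English description precedes it below -/
import Mathlib

section
/- Let n ≥ 3 and m ≥ 3 with gcd(i, m) = 1, and let a ∈ Z_n be an element whose additive order is greater than 2. Then the Cayley graph Cay(Z_n × Z_m, ±{0,a} × {±i}) admits a C_m-factorization into 3 C_m-factors. -/
open SimpleGraph

/-- A `C_k`-factor: a spanning 2-regular subgraph all of whose connected
components (necessarily cycles) have exactly `k` vertices. -/
def IsCycleFactor {V : Type*} (H : SimpleGraph V) (k : ℕ) : Prop :=
  (∀ v : V, (H.neighborSet v).ncard = 2) ∧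
  (∀ v : V, (H.connectedComponentMk v).supp.ncard = k)

/-- A 1-factor (perfect matching): every vertex has exactly one neighbour. -/
def IsOneFactor {V : Type*} (H : SimpleGraph V) : Prop :=
  ∀ v : V, (H.neighborSet v).ncard = 1

/-- `F 0, …, F (N-1)` partitions the edge set of `G`. -/
def IsDecompOn {V : Type*} (G : SimpleGraph V) (F : ℕ → SimpleGraph V) (N : ℕ) : Prop :=
  (∀ i < N, F i ≤ G) ∧
  (∀ i < N, ∀ j < N, i ≠ j → Disjoint (F i).edgeSet (F j).edgeSet) ∧
  G.edgeSet = ⋃ i ∈ Set.Iio N, (F i).edgeSet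

/-- A Hamilton–Waterloo decomposition of a graph `G` into `α` `C_m`-factors
and `β` `C_n`-factors. -/
def IsHWGraph {V : Type*} (G : SimpleGraph V) (m n α β : ℕ) : Prop :=
  ∃ F : ℕ → SimpleGraph V, IsDecompOn G F (α + β) ∧
    (∀ i < α, IsCycleFactor (F i) m) ∧
    (∀ i, α ≤ i → i < α + β → IsCycleFactor (F i) n)

/-- `HW v m n α β`: a partition of `E(K_v)` (for `v` odd) or of `E(K_v)` minus a
perfect matching (for `v` even) into `α` `C_m`-factors and `β` `C_n`-factors. -/
def HW (v m n α β : ℕ) : Prop :=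
  ∃ I : SimpleGraph (Fin v),
    (Odd v → I = ⊥) ∧ (Even v → IsOneFactor I) ∧
    IsHWGraph ((⊤ : SimpleGraph (Fin v)) \ I) m n α β

/-- The complete `u`-partite graph with parts of size `g`. -/
def Kpartite (u g : ℕ) : SimpleGraph (Fin u × Fin g) :=
  SimpleGraph.fromRel (fun a b => a.1 ≠ b.1)

/-- The Cayley graph on an additive group with connection set `S`. -/
def cayley (Γ : Type*) [AddGroup Γ] (S : Set Γ) : SimpleGraph Γ :=
  SimpleGraph.fromRel (fun a b => a - b ∈ S)

/-! ### Auxiliary machinery -/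

section Machinery
variable {V : Type*}

/-- The graph whose edges join `v` to `e v`, for a permutation `e`. -/
def stepGraph (e : Equiv.Perm V) : SimpleGraph V := SimpleGraph.fromRel (fun u v => v = e u)

lemma stepGraph_adj (e : Equiv.Perm V) (u v : V) :
    (stepGraph e).Adj u v ↔ u ≠ v ∧ (v = e u ∨ u = e v) := by
  simp [stepGraph, SimpleGraph.fromRel_adj]

lemma stepGraph_nbhd (e : Equiv.Perm V) (hne : ∀ v, e v ≠ v) (u : V) :
    (stepGraph e).neighborSet u = {e u, e.symm u} := by
  ext v
  simp only [SimpleGraph.mem_neighborSet, stepGraph_adj, Set.mem_insert_iff,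
    Set.mem_singleton_iff]
  constructor
  · rintro ⟨h, h1 | h1⟩
    · exact Or.inl h1
    · right; rw [h1]; simp
  · rintro (rfl | rfl)
    · exact ⟨fun h => hne u h.symm, Or.inl rfl⟩
    · exact ⟨fun h => hne u ((Equiv.eq_symm_apply _).mp h), Or.inr (by simp)⟩

lemma stepGraph_deg (e : Equiv.Perm V) (hne : ∀ v, e v ≠ v) (h2 : ∀ v, e (e v) ≠ v) (u : V) :
    ((stepGraph e).neighborSet u).ncard = 2 := by
  rw [stepGraph_nbhd e hne u, Set.ncard_pair]
  exact fun h => h2 u ((congrArg e h).trans (e.apply_symm_apply u))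

lemma stepGraph_reach (e : Equiv.Perm V) (m : ℕ) (hm : 0 < m) (hne : ∀ v, e v ≠ v)
    (hid : ∀ v, e^[m] v = v) (v w : V) :
    (stepGraph e).Reachable v w ↔ ∃ k, w = e^[k] v := by
  constructor
  · rintro ⟨p⟩
    induction p with
    | nil => exact ⟨0, rfl⟩
    | cons h p ih =>
      rename_i x y z
      obtain ⟨k, rfl⟩ := ih
      rw [stepGraph_adj] at h
      rcases h.2 with h1 | h1
      · subst h1
        exact ⟨k + 1, by rw [Function.iterate_succ_apply]⟩
      · have hy : (⇑e)^[m - 1] x = y := by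
          apply e.injective
          rw [(Function.iterate_succ_apply' (⇑e) (m - 1) x).symm.trans
            (by rw [Nat.sub_add_cancel hm] : (⇑e)^[m - 1 + 1] x = (⇑e)^[m] x), hid]
          exact h1
        exact ⟨k + (m - 1), by rw [Function.iterate_add_apply, hy]⟩
  · rintro ⟨k, rfl⟩
    induction k with
    | zero => exact Reachable.refl v
    | succ k ih =>
      refine ih.trans ⟨Walk.cons ?_ Walk.nil⟩
      rw [Function.iterate_succ_apply', stepGraph_adj]
      exact ⟨fun h => hne _ h.symm, Or.inl rfl⟩

lemma stepGraph_supp (e : Equiv.Perm V) (m : ℕ) (hm : 0 < m) (hne : ∀ v, e v ≠ v)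
    (hid : ∀ v, e^[m] v = v) (v : V) :
    ((stepGraph e).connectedComponentMk v).supp = (fun k => e^[k] v) '' Set.Iio m := by
  have hmul : ∀ q w, (⇑e)^[m * q] w = w := by
    intro q w
    rw [Function.iterate_mul]
    have h1 : (⇑e)^[m] = id := funext hid
    rw [h1, Function.iterate_id, id_eq]
  ext w
  rw [SimpleGraph.ConnectedComponent.mem_supp_iff, SimpleGraph.ConnectedComponent.eq,
    SimpleGraph.reachable_comm, stepGraph_reach e m hm hne hid]
  simp only [Set.mem_image, Set.mem_Iio]
  constructor
  · rintro ⟨k, rfl⟩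
    refine ⟨k % m, Nat.mod_lt _ hm, ?_⟩
    conv_rhs => rw [← Nat.div_add_mod k m, Function.iterate_add_apply, hmul]
  · rintro ⟨k, _, rfl⟩
    exact ⟨k, rfl⟩

lemma stepGraph_supp_ncard (e : Equiv.Perm V) (m : ℕ) (hm : 0 < m) (hne : ∀ v, e v ≠ v)
    (hid : ∀ v, e^[m] v = v) (v : V)
    (hinj : ∀ k l, k < m → l < m → e^[k] v = e^[l] v → k = l) :
    ((stepGraph e).connectedComponentMk v).supp.ncard = m := by
  have hIio : (Set.Iio m).ncard = m := by
    rw [← Finset.coe_Iio, Set.ncard_coe_finset, Nat.card_Iio]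
  have hinja : Set.InjOn (fun k => (⇑e)^[k] v) (Set.Iio m) :=
    fun k hk l hl h => hinj k l hk hl h
  rw [stepGraph_supp e m hm hne hid v, Set.ncard_image_of_injOn hinja, hIio]

end Machinery

section Steps
variable {n m : ℕ}

/-- The step permutation `(x, t) ↦ (x + c t, t + i)`. -/
def stepPerm (c : ZMod m → ZMod n) (i : ZMod m) : Equiv.Perm (ZMod n × ZMod m) where
  toFun p := (p.1 + c p.2, p.2 + i)
  invFun p := (p.1 - c (p.2 - i), p.2 - i)
  left_inv p := by simp
  right_inv p := by simp

lemma stepPerm_apply (c : ZMod m → ZMod n) (i : ZMod m) (p : ZMod n × ZMod m) :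
    stepPerm c i p = (p.1 + c p.2, p.2 + i) := rfl

lemma stepPerm_iter (c : ZMod m → ZMod n) (i : ZMod m) (k : ℕ) (p : ZMod n × ZMod m) :
    (⇑(stepPerm c i))^[k] p =
      (p.1 + ∑ l ∈ Finset.range k, c (p.2 + (l : ZMod m) * i), p.2 + (k : ZMod m) * i) := by
  induction k with
  | zero => simp
  | succ k ih =>
    rw [Function.iterate_succ_apply', ih, stepPerm_apply]
    rw [Finset.sum_range_succ]
    refine Prod.ext ?_ ?_ <;> simp <;> push_cast <;> ring
end Steps

section Sums
variable {m : ℕ} [NeZero m] {β : Type*} [AddCommGroup β]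

lemma sum_cast (g : ZMod m → β) : ∑ k ∈ Finset.range m, g (k : ZMod m) = ∑ u : ZMod m, g u := by
  refine Finset.sum_nbij' (fun k => (k : ZMod m)) (fun u => u.val) ?_ ?_ ?_ ?_ ?_
  · intro k _; exact Finset.mem_univ _
  · intro u _; simp [ZMod.val_lt u]
  · intro k hk; exact ZMod.val_cast_of_lt (Finset.mem_range.mp hk)
  · intro u _; exact ZMod.natCast_rightInverse u
  · intro k _; rfl

lemma alt_sum (a : β) : ∀ M : ℕ, ∑ k ∈ Finset.range M, (if Even k then (-a) else a)
    = if Even M then 0 else -a := by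
  intro M
  induction M with
  | zero => simp
  | succ M ih =>
    rw [Finset.sum_range_succ, ih]
    by_cases h : Even M <;> simp [h, Nat.even_add_one]

lemma sum_shift (t i : ZMod m) (hiu : IsUnit i) (g : ZMod m → β) :
    ∑ u : ZMod m, g (t + u * i) = ∑ u : ZMod m, g u := by
  obtain ⟨w, hw⟩ := hiu
  let φ : ZMod m ≃ ZMod m :=
    { toFun := fun u => t + u * i
      invFun := fun x => (x - t) * ↑w⁻¹
      left_inv := by
        intro u
        simp only [add_sub_cancel_left, ← hw]
        exact Units.mul_inv_cancel_right u w
      right_inv := by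
        intro x
        simp only [← hw]
        rw [Units.inv_mul_cancel_right]
        ring }
  exact Equiv.sum_comp φ g
end Sums

section Cfun
variable {n : ℕ}

/-- The "first-coordinate offset" functions of the three factors. -/
def cfun (m : ℕ) (a : ZMod n) (j : ℕ) (t : ZMod m) : ZMod n :=
  if j = 0 then
    if t.val = 0 then (if Even m then -a else 0) else if t.val = 1 then a
    else if Even t.val then -a else a
  else if j = 1 then
    if t.val = 0 then (if Even m then 0 else -a) else if t.val = 1 then 0
    else if Even t.val then a else -a
  else
    if t.val = 0 then a else if t.val = 1 then -a else 0

lemma cfun_mem {m : ℕ} (a : ZMod n) (j : ℕ) (t : ZMod m) :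
    cfun m a j t = 0 ∨ cfun m a j t = a ∨ cfun m a j t = -a := by
  unfold cfun; split_ifs <;> simp

lemma cfun_distinct {m : ℕ} (a : ZMod n) (ha0 : a ≠ 0) (haa : a ≠ -a) (t : ZMod m)
    (j k : ℕ) (hj : j < 3) (hk : k < 3) (hjk : j ≠ k) :
    cfun m a j t ≠ cfun m a k t := by
  have h1 : -a ≠ 0 := fun h => ha0 (neg_eq_zero.mp h)
  have h2 : -a ≠ a := fun h => haa h.symm
  have h3 : (0 : ZMod n) ≠ a := fun h => ha0 h.symm
  have h4 : (0 : ZMod n) ≠ -a := fun h => h1 h.symm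
  have d01 : cfun m a 0 t ≠ cfun m a 1 t := by
    unfold cfun; norm_num; split_ifs <;> simp_all
  have d02 : cfun m a 0 t ≠ cfun m a 2 t := by
    unfold cfun; norm_num; split_ifs <;> simp_all
  have d12 : cfun m a 1 t ≠ cfun m a 2 t := by
    unfold cfun; norm_num; split_ifs <;> simp_all
  interval_cases j <;> interval_cases k <;>
    first
      | exact absurd rfl hjk
      | exact d01 | exact d02 | exact d12
      | exact d01.symm | exact d02.symm | exact d12.symm

lemma cfun_cover {m : ℕ} (a : ZMod n) (t : ZMod m) (s : ZMod n)
    (hs : s = 0 ∨ s = a ∨ s = -a) : ∃ j < 3, cfun m a j t = s := by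
  by_cases h0 : t.val = 0
  · by_cases hEm : Even m
    · rcases hs with rfl|rfl|rfl
      · exact ⟨1, by norm_num, by simp [cfun, h0, hEm]⟩
      · exact ⟨2, by norm_num, by simp [cfun, h0, hEm]⟩
      · exact ⟨0, by norm_num, by simp [cfun, h0, hEm]⟩
    · rcases hs with rfl|rfl|rfl
      · exact ⟨0, by norm_num, by simp [cfun, h0, hEm]⟩
      · exact ⟨2, by norm_num, by simp [cfun, h0, hEm]⟩
      · exact ⟨1, by norm_num, by simp [cfun, h0, hEm]⟩
  · by_cases h1 : t.val = 1
    · rcases hs with rfl|rfl|rfl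
      · exact ⟨1, by norm_num, by simp [cfun, h0, h1]⟩
      · exact ⟨0, by norm_num, by simp [cfun, h0, h1]⟩
      · exact ⟨2, by norm_num, by simp [cfun, h0, h1]⟩
    · by_cases hEt : Even t.val
      · rcases hs with rfl|rfl|rfl
        · exact ⟨2, by norm_num, by simp [cfun, h0, h1]⟩
        · exact ⟨1, by norm_num, by simp [cfun, h0, h1, hEt]⟩
        · exact ⟨0, by norm_num, by simp [cfun, h0, h1, hEt]⟩
      · rcases hs with rfl|rfl|rfl
        · exact ⟨2, by norm_num, by simp [cfun, h0, h1]⟩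
        · exact ⟨0, by norm_num, by simp [cfun, h0, h1, hEt]⟩
        · exact ⟨1, by norm_num, by simp [cfun, h0, h1, hEt]⟩

lemma cfun_rowsum (m : ℕ) [NeZero m] (hm : 3 ≤ m) (a : ZMod n) (j : ℕ) (hj : j < 3) :
    ∑ t : ZMod m, cfun m a j t = 0 := by
  have h0m : (0 : ℕ) ∈ Finset.range m := Finset.mem_range.mpr (by omega)
  have h1m : (1 : ℕ) ∈ Finset.range m := Finset.mem_range.mpr (by omega)
  interval_cases j
  · rw [← sum_cast (g := cfun m a 0)]
    have h1 : ∀ k ∈ Finset.range m, cfun m a 0 (k : ZMod m)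
        = (if Even k then -a else a) + (if k = 0 then (if Even m then 0 else a) else 0) := by
      intro k hk
      unfold cfun
      rw [if_pos rfl, ZMod.val_cast_of_lt (Finset.mem_range.mp hk)]
      rcases k with _ | _ | k
      · by_cases h : Even m <;> simp [h]
      · norm_num
      · have h2 : k + 2 ≠ 0 := by omega
        have h3 : k + 2 ≠ 1 := by omega
        simp [h2, h3]
    rw [Finset.sum_congr rfl h1, Finset.sum_add_distrib, alt_sum,
      Finset.sum_ite_eq' (Finset.range m) 0 (fun _ => if Even m then 0 else a), if_pos h0m]
    by_cases h : Even m <;> simp [h]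
  · rw [← sum_cast (g := cfun m a 1)]
    have h1 : ∀ k ∈ Finset.range m, cfun m a 1 (k : ZMod m)
        = (if Even k then -(-a) else -a) + ((if k = 0 then (if Even m then -a else -a - a) else 0)
          + (if k = 1 then a else 0)) := by
      intro k hk
      unfold cfun
      rw [if_neg one_ne_zero, if_pos rfl, ZMod.val_cast_of_lt (Finset.mem_range.mp hk)]
      rcases k with _ | _ | k
      · by_cases h : Even m <;> simp [h] <;> ring
      · norm_num
      · have h2 : k + 2 ≠ 0 := by omega
        have h3 : k + 2 ≠ 1 := by omega
        simp [h2, h3]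
    rw [Finset.sum_congr rfl h1, Finset.sum_add_distrib, alt_sum, Finset.sum_add_distrib,
      Finset.sum_ite_eq' (Finset.range m) 0
        (fun _ => if Even m then -a else -a - a), if_pos h0m,
      Finset.sum_ite_eq' (Finset.range m) 1 (fun _ => a), if_pos h1m]
    by_cases h : Even m <;> simp [h] <;> ring
  · rw [← sum_cast (g := cfun m a 2)]
    have h1 : ∀ k ∈ Finset.range m, cfun m a 2 (k : ZMod m)
        = (if k = 0 then a else 0) + (if k = 1 then -a else 0) := by
      intro k hk
      unfold cfun
      rw [if_neg (by norm_num), if_neg (by norm_num),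
        ZMod.val_cast_of_lt (Finset.mem_range.mp hk)]
      rcases k with _ | _ | k
      · norm_num
      · norm_num
      · have h2 : k + 2 ≠ 0 := by omega
        have h3 : k + 2 ≠ 1 := by omega
        simp [h2, h3]
    rw [Finset.sum_congr rfl h1, Finset.sum_add_distrib,
      Finset.sum_ite_eq' (Finset.range m) 0 (fun _ => a), if_pos h0m,
      Finset.sum_ite_eq' (Finset.range m) 1 (fun _ => -a), if_pos h1m]
    ring
end Cfun

theorem stmt_1 (n m i : ℕ) (hn : 3 ≤ n) (hm : 3 ≤ m) (hi : Nat.gcd i m = 1)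
    (a : ZMod n) (ha : 2 < addOrderOf a) :
    ∃ F : ℕ → SimpleGraph (ZMod n × ZMod m),
      IsDecompOn (cayley (ZMod n × ZMod m)
        {p | p.1 ∈ ({0, a, -a} : Set (ZMod n)) ∧
             p.2 ∈ ({(i : ZMod m), -(i : ZMod m)} : Set (ZMod m))}) F 3 ∧
      ∀ j < 3, IsCycleFactor (F j) m := by
  haveI : NeZero m := ⟨by omega⟩
  have hm0 : 0 < m := by omega
  -- basic facts about `i` and `a`
  have hi0 : (i : ZMod m) ≠ 0 := by
    intro h
    rw [ZMod.natCast_eq_zero_iff] at h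
    have h2 : m ∣ Nat.gcd i m := Nat.dvd_gcd h dvd_rfl
    rw [hi] at h2
    have := Nat.le_of_dvd (by omega) h2
    omega
  have hiu : IsUnit (i : ZMod m) := by
    rw [ZMod.isUnit_iff_coprime]; exact hi
  have h2i : (i : ZMod m) + i ≠ 0 := by
    intro h
    obtain ⟨w, hw⟩ := hiu
    have h1 : ((i : ZMod m) + i) * ↑w⁻¹ = 0 := by rw [h, zero_mul]
    rw [add_mul, ← hw, Units.mul_inv] at h1
    have h2 : ((2 : ℕ) : ZMod m) = 0 := by
      push_cast
      linear_combination h1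
    rw [ZMod.natCast_eq_zero_iff] at h2
    have := Nat.le_of_dvd (by omega) h2
    omega
  have haddii : ∀ t : ZMod m, t + i + i ≠ t := by
    intro t h
    apply h2i
    have h2 : t + ((i : ZMod m) + i) = t + 0 := by
      rw [add_zero, ← add_assoc]; exact h
    exact add_left_cancel h2
  have ha0 : a ≠ 0 := by
    intro h; rw [h, addOrderOf_zero] at ha; omega
  have haa : a ≠ -a := by
    intro h
    have h2 : 2 • a = 0 := by
      rw [two_smul]
      nth_rewrite 2 [h]
      exact add_neg_cancel a
    have h3 := addOrderOf_dvd_iff_nsmul_eq_zero.mpr h2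
    have h4 : addOrderOf a ≤ 2 := Nat.le_of_dvd (by norm_num) h3
    omega
  -- the three factors
  have hestep : ∀ j (p : ZMod n × ZMod m),
      stepPerm (cfun m a j) (i : ZMod m) p = (p.1 + cfun m a j p.2, p.2 + i) :=
    fun j p => rfl
  have hne : ∀ j v, stepPerm (cfun m a j) (i : ZMod m) v ≠ v := by
    intro j v h
    apply hi0
    have h2 := congrArg Prod.snd h
    simp only [hestep] at h2
    have h3 : v.2 + (i : ZMod m) = v.2 + 0 := by rw [add_zero]; exact h2
    exact add_left_cancel h3
  have h2step : ∀ j v, stepPerm (cfun m a j) (i : ZMod m) (stepPerm (cfun m a j) (i : ZMod m) v) ≠ v := by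
    intro j v h
    have h2 := congrArg Prod.snd h
    simp only [hestep] at h2
    exact haddii v.2 h2
  have hid : ∀ j, j < 3 → ∀ v, (⇑(stepPerm (cfun m a j) (i : ZMod m)))^[m] v = v := by
    intro j hj v
    rw [stepPerm_iter]
    have hsum : ∑ l ∈ Finset.range m, cfun m a j (v.2 + (l : ZMod m) * (i : ZMod m)) = 0 := by
      rw [sum_cast (g := fun u => cfun m a j (v.2 + u * (i : ZMod m))),
        sum_shift v.2 (i : ZMod m) hiu (cfun m a j), cfun_rowsum m hm a j hj]
    rw [hsum, ZMod.natCast_self]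
    simp
  have hinj : ∀ j (v : ZMod n × ZMod m) k l, k < m → l < m →
      (⇑(stepPerm (cfun m a j) (i : ZMod m)))^[k] v = (⇑(stepPerm (cfun m a j) (i : ZMod m)))^[l] v → k = l := by
    intro j v k l hk hl h
    rw [stepPerm_iter, stepPerm_iter] at h
    have h2 := congrArg Prod.snd h
    simp only at h2
    have h3 : (k : ZMod m) * i = (l : ZMod m) * i := add_left_cancel h2
    obtain ⟨w, hw⟩ := hiu
    rw [← hw] at h3
    have h4 : (k : ZMod m) = (l : ZMod m) := by
      have h5 := congrArg (fun z => z * ((w⁻¹ : (ZMod m)ˣ) : ZMod m)) h3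
      simpa [Units.mul_inv_cancel_right] using h5
    have h6 := congrArg ZMod.val h4
    rwa [ZMod.val_cast_of_lt hk, ZMod.val_cast_of_lt hl] at h6
  have hle : ∀ j, stepGraph (stepPerm (cfun m a j) (i : ZMod m)) ≤ (cayley (ZMod n × ZMod m)
      {p | p.1 ∈ ({0, a, -a} : Set (ZMod n)) ∧
           p.2 ∈ ({(i : ZMod m), -(i : ZMod m)} : Set (ZMod m))}) := by
    intro j u v huv
    rw [stepGraph_adj] at huv
    obtain ⟨hneq, hcase⟩ := huv
    have key : ∀ w : ZMod n × ZMod m, (cayley (ZMod n × ZMod m)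
        {p | p.1 ∈ ({0, a, -a} : Set (ZMod n)) ∧
             p.2 ∈ ({(i : ZMod m), -(i : ZMod m)} : Set (ZMod m))}).Adj w (stepPerm (cfun m a j) (i : ZMod m) w) := by
      intro w
      rw [cayley, SimpleGraph.fromRel_adj]
      refine ⟨fun h => hne j w h.symm, Or.inr ?_⟩
      rw [hestep]
      simp only [Set.mem_setOf_eq, Set.mem_insert_iff, Set.mem_singleton_iff]
      constructor
      · simpa using cfun_mem a j w.2
      · left; simp
    rcases hcase with rfl | rfl
    · exact key u
    · exact (key v).symm
  refine ⟨fun j => stepGraph (stepPerm (cfun m a j) (i : ZMod m)), ⟨fun j _ => hle j, ?_, ?_⟩, ?_⟩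
  · -- pairwise edge-disjoint
    intro j hj k hk hjk
    rw [Set.disjoint_left]
    intro ed h1 h2
    induction ed using Sym2.ind with
    | _ u v =>
      rw [SimpleGraph.mem_edgeSet, stepGraph_adj] at h1 h2
      rcases h1.2 with ha1 | ha1 <;> rcases h2.2 with ha2 | ha2
      · refine cfun_distinct a ha0 haa u.2 j k hj hk hjk ?_
        have h3 := congrArg Prod.fst (ha1.symm.trans ha2)
        simp only [hestep] at h3
        exact add_left_cancel h3
      · have hv := congrArg Prod.snd ha1
        have hu := congrArg Prod.snd ha2
        simp only [hestep] at hv hu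
        rw [hv] at hu
        exact haddii u.2 hu.symm
      · have hv := congrArg Prod.snd ha2
        have hu := congrArg Prod.snd ha1
        simp only [hestep] at hv hu
        rw [hv] at hu
        exact haddii u.2 hu.symm
      · refine cfun_distinct a ha0 haa v.2 j k hj hk hjk ?_
        have h3 := congrArg Prod.fst (ha1.symm.trans ha2)
        simp only [hestep] at h3
        exact add_left_cancel h3
  · -- edge sets cover
    ext ed
    induction ed using Sym2.ind with
    | _ u v =>
      simp only [Set.mem_iUnion, SimpleGraph.mem_edgeSet, Set.mem_Iio, exists_prop]
      have key : ∀ u v : ZMod n × ZMod m,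
          (v - u) ∈ {p : ZMod n × ZMod m | p.1 ∈ ({0, a, -a} : Set (ZMod n)) ∧
             p.2 ∈ ({(i : ZMod m), -(i : ZMod m)} : Set (ZMod m))} →
          ∃ j < 3, (stepGraph (stepPerm (cfun m a j) (i : ZMod m))).Adj u v := by
        intro u v hmem
        simp only [Set.mem_setOf_eq, Set.mem_insert_iff, Set.mem_singleton_iff] at hmem
        obtain ⟨hs1, hs2⟩ := hmem
        rcases hs2 with hs2 | hs2
        · -- second coordinate of v - u is i : v = stepPerm (cfun m a j) (i : ZMod m) u
          obtain ⟨j, hj3, hcj⟩ := cfun_cover a u.2 (v - u).1 hs1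
          refine ⟨j, hj3, ?_⟩
          rw [stepGraph_adj]
          refine ⟨?_, Or.inl ?_⟩
          · intro h
            rw [h] at hs2
            simp only [sub_self, Prod.snd_zero] at hs2
            exact hi0 hs2.symm
          · rw [hestep]
            refine Prod.ext ?_ ?_
            · simp only
              rw [hcj]
              simp
            · simp only
              rw [← hs2]
              simp
        · -- second coordinate of v - u is -i : u = stepPerm (cfun m a j) (i : ZMod m) v
          have h6 : (u - v).2 = i := by
            have h7 : (u - v).2 = -((v - u).2) := by simp
            rw [h7, hs2, neg_neg]
          obtain ⟨j, hj3, hcj⟩ := cfun_cover a v.2 (u - v).1 (by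
            have h8 : (u - v).1 = -((v - u).1) := by simp
            rw [h8]
            rcases hs1 with h | h | h
            · left; rw [h, neg_zero]
            · right; right; rw [h]
            · right; left; rw [h, neg_neg])
          refine ⟨j, hj3, ?_⟩
          rw [stepGraph_adj]
          refine ⟨?_, Or.inr ?_⟩
          · intro h
            rw [h] at hs2
            simp only [sub_self, Prod.snd_zero] at hs2
            exact hi0 (neg_eq_zero.mp hs2.symm)
          · rw [hestep]
            refine Prod.ext ?_ ?_
            · simp only
              rw [hcj]
              simp
            · simp only
              rw [← h6]
              simp
      constructor
      · intro hadj
        rw [cayley, SimpleGraph.fromRel_adj] at hadj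
        obtain ⟨hneq, hcase⟩ := hadj
        rcases hcase with hmem | hmem
        · obtain ⟨j, hj, hadj2⟩ := key v u hmem
          exact ⟨j, hj, hadj2.symm⟩
        · exact key u v hmem
      · rintro ⟨j, _, hadj⟩
        exact hle j hadj
  · -- cycle factors
    intro j hj
    constructor
    · exact fun v => stepGraph_deg (stepPerm (cfun m a j) (i : ZMod m)) (hne j) (h2step j) v
    · exact fun v => stepGraph_supp_ncard (stepPerm (cfun m a j) (i : ZMod m)) m hm0 (hne j) (hid j hj) v (hinj j v)
end

section
/- There exists a 2-factorization of K_24 minus a perfect matching into exactly 9 C_3-factors and 2 C_4-factors. That is, (9,2) ∈ HWP(24; 3, 4). -/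
open SimpleGraph

/-! The decomposition is exhibited explicitly. A map `f` on the vertices all of whose points
have minimal period `k` is a permutation whose cycles all have length `k`, so the graph joining
each `v` to `f v` is a `C_k`-factor (for `k ≥ 3`) or a 1-factor (for `k = 2`): its neighbourhoods
are `{f v, f⁻¹ v}` and its components are the orbits of `f`. The 1-factor is `v ↦ v + 12`, the
eleven factors are given by successor tables, and the remaining checks on `Fin 24` are finite. -/

open SimpleGraph Function

def succGraph {V : Type*} (f : V → V) : SimpleGraph V :=
  fromRel fun a b => f a = b

instance {V : Type*} [DecidableEq V] (f : V → V) : DecidableRel (succGraph f).Adj :=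
  inferInstanceAs (DecidableRel (fromRel fun a b => f a = b).Adj)

section SuccGraph

variable {V : Type*} {f : V → V} {k : ℕ}

theorem succGraph_adj {a b : V} : (succGraph f).Adj a b ↔ a ≠ b ∧ (f a = b ∨ f b = a) :=
  fromRel_adj _ a b

theorem apply_eq_iff_eq_iterate_pred (hf : ∀ v, minimalPeriod f v = k) (hk : 0 < k)
    {v w : V} : f w = v ↔ w = f^[k - 1] v := by
  obtain ⟨j, rfl⟩ := Nat.exists_eq_add_one_of_ne_zero hk.ne'
  have hper : ∀ x, f^[j + 1] x = x := fun x => hf x ▸ iterate_minimalPeriod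
  rw [Nat.add_sub_cancel]
  constructor
  · rintro rfl
    rw [← iterate_succ_apply]
    exact (hper w).symm
  · rintro rfl
    rw [← iterate_succ_apply' f]
    exact hper v

theorem neighborSet_succGraph (hf : ∀ v, minimalPeriod f v = k) (hk : 2 ≤ k) (v : V) :
    (succGraph f).neighborSet v = {f v, f^[k - 1] v} := by
  have hv : ∀ {n}, 0 < n → n < k → v ≠ f^[n] v := fun h0 hn =>
    (iterate_eq_iterate_iff_of_lt_minimalPeriod (m := 0) (by rw [hf]; omega)
      (by rw [hf]; omega)).not.mpr h0.ne
  ext w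
  rw [mem_neighborSet, succGraph_adj, apply_eq_iff_eq_iterate_pred hf (by omega) (v := v) (w := w)]
  simp only [Set.mem_insert_iff, Set.mem_singleton_iff]
  constructor
  · rintro ⟨-, h | h⟩
    exacts [Or.inl h.symm, Or.inr h]
  · rintro (rfl | rfl)
    exacts [⟨hv one_pos (by omega), Or.inl rfl⟩, ⟨hv (by omega) (by omega), Or.inr rfl⟩]

theorem reachable_succGraph_iff (hf : ∀ v, minimalPeriod f v = k) (hk : 0 < k) {v w : V} :
    (succGraph f).Reachable v w ↔ ∃ n, f^[n] v = w := by
  constructor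
  · rw [reachable_iff_reflTransGen]
    intro h
    induction h with
    | refl => exact ⟨0, rfl⟩
    | tail _ hab ih =>
      obtain ⟨n, rfl⟩ := ih
      rcases (succGraph_adj.mp hab).2 with h | h
      · exact ⟨n + 1, by rw [iterate_succ_apply', h]⟩
      · rw [apply_eq_iff_eq_iterate_pred hf hk] at h
        exact ⟨k - 1 + n, by rw [iterate_add_apply, h]⟩
  · rintro ⟨n, rfl⟩
    induction n with
    | zero => rfl
    | succ n ih =>
      refine ih.trans ?_
      rw [iterate_succ_apply']
      by_cases h : f^[n] v = f (f^[n] v)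
      · rw [← h]
      · exact (succGraph_adj.mpr ⟨h, Or.inl rfl⟩).reachable

theorem supp_connectedComponentMk_succGraph (hf : ∀ v, minimalPeriod f v = k) (hk : 0 < k)
    (v : V) : ((succGraph f).connectedComponentMk v).supp = (f^[·] v) '' Set.Iio k := by
  ext w
  rw [ConnectedComponent.mem_supp_iff, ConnectedComponent.eq, reachable_comm,
    reachable_succGraph_iff hf hk]
  constructor
  · rintro ⟨n, rfl⟩
    exact ⟨n % k, Nat.mod_lt n hk, by dsimp only; rw [← hf v, iterate_mod_minimalPeriod_eq]⟩
  · rintro ⟨n, -, rfl⟩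
    exact ⟨n, rfl⟩

theorem isCycleFactor_succGraph (hf : ∀ v, minimalPeriod f v = k) (hk : 3 ≤ k) :
    IsCycleFactor (succGraph f) k := by
  refine ⟨fun v => ?_, fun v => ?_⟩
  · rw [neighborSet_succGraph hf (by omega), Set.ncard_pair]
    exact (iterate_eq_iterate_iff_of_lt_minimalPeriod (m := 1) (by rw [hf]; omega)
      (by rw [hf]; omega)).not.mpr (by omega)
  · rw [supp_connectedComponentMk_succGraph hf (by omega), Set.InjOn.ncard_image,
      Set.ncard_Iio_nat]
    exact hf v ▸ iterate_injOn_Iio_minimalPeriod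

theorem isOneFactor_succGraph (hf : ∀ v, minimalPeriod f v = 2) : IsOneFactor (succGraph f) :=
  fun v => by
    rw [neighborSet_succGraph hf le_rfl, show 2 - 1 = 1 from rfl, iterate_one,
      Set.pair_eq_singleton, Set.ncard_singleton]

end SuccGraph

theorem isDecompOn_of_existsUnique {V : Type*} {G : SimpleGraph V} {F : ℕ → SimpleGraph V}
    {N : ℕ} (hcover : ∀ a b, G.Adj a b ↔ ∃ i < N, (F i).Adj a b)
    (hunique : ∀ a b, ∀ i < N, ∀ j < N, (F i).Adj a b → (F j).Adj a b → i = j) :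
    IsDecompOn G F N := by
  refine ⟨fun i hi a b hab => (hcover a b).mpr ⟨i, hi, hab⟩, fun i hi j hj hij => ?_, ?_⟩
  · rw [Set.disjoint_left]
    rintro e hi' hj'
    induction e using Sym2.ind with
    | _ a b => exact hij (hunique a b i hi j hj hi' hj')
  · ext e
    induction e using Sym2.ind with
    | _ a b => simp only [mem_edgeSet, hcover, Set.mem_iUnion, Set.mem_Iio, exists_prop]

/-- Successor tables of the eleven factors: `0`–`8` are unions of eight triangles, `9` and `10`
unions of six 4-cycles. -/
def factorSucc : ℕ → Fin 24 → Fin 24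
  | 0 => ![15, 11, 0, 4, 23, 10, 20, 17, 16, 6, 13, 21, 18, 5, 12, 2, 19, 22, 14, 8, 9, 1, 7, 3]
  | 1 => ![3, 6, 22, 16, 17, 9, 15, 11, 23, 19, 8, 12, 7, 18, 4, 1, 0, 14, 21, 5, 2, 13, 20, 10]
  | 2 => ![8, 22, 5, 13, 10, 21, 4, 18, 11, 14, 6, 0, 1, 17, 23, 19, 7, 3, 16, 20, 15, 2, 12, 9]
  | 3 => ![1, 10, 9, 2, 12, 14, 22, 21, 6, 3, 0, 16, 19, 11, 20, 7, 13, 23, 17, 4, 5, 15, 8, 18]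
  | 4 => ![21, 7, 1, 12, 13, 23, 16, 2, 9, 18, 17, 10, 20, 22, 6, 5, 14, 11, 8, 0, 3, 19, 4, 15]
  | 5 => ![22, 19, 16, 8, 11, 3, 12, 23, 5, 15, 9, 20, 21, 7, 0, 10, 17, 2, 1, 18, 4, 6, 14, 13]
  | 6 => ![17, 20, 12, 10, 8, 6, 7, 5, 21, 0, 18, 19, 13, 2, 11, 16, 22, 9, 3, 14, 23, 4, 15, 1]
  | 7 => ![6, 17, 11, 22, 7, 12, 23, 9, 1, 4, 20, 18, 16, 14, 15, 13, 5, 8, 2, 3, 21, 10, 19, 0]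
  | 8 => ![13, 16, 10, 11, 5, 18, 3, 8, 14, 1, 19, 6, 15, 20, 7, 17, 9, 12, 4, 2, 0, 22, 23, 21]
  | 9 => ![4, 5, 6, 7, 1, 0, 19, 10, 12, 13, 14, 15, 9, 8, 3, 18, 20, 21, 22, 23, 17, 16, 11, 2]
  | 10 => ![18, 14, 4, 1, 15, 11, 13, 0, 2, 22, 12, 9, 23, 19, 21, 8, 10, 6, 20, 17, 7, 3, 5, 16]
  | _ => id

theorem stmt_2 : HW 24 3 4 9 2 := by
  have hmatching : ∀ v : Fin 24, minimalPeriod (· + 12) v = 2 := fun v =>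
    minimalPeriod_eq_prime (by revert v; decide) (by revert v; decide)
  have htriangles : ∀ i < 9, ∀ v, minimalPeriod (factorSucc i) v = 3 := by
    have : ∀ i < 9, ∀ v, IsPeriodicPt (factorSucc i) 3 v ∧ ¬IsFixedPt (factorSucc i) v := by
      decide
    exact fun i hi v => minimalPeriod_eq_prime (this i hi v).1 (this i hi v).2
  have hsquares : ∀ i, 9 ≤ i → i < 11 → ∀ v, minimalPeriod (factorSucc i) v = 4 := by
    have : ∀ i, 9 ≤ i → i < 11 → ∀ v,
        ¬IsPeriodicPt (factorSucc i) (2 ^ 1) v ∧ IsPeriodicPt (factorSucc i) (2 ^ 2) v := by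
      decide
    exact fun i hi hi' v => minimalPeriod_eq_prime_pow (this i hi hi' v).1 (this i hi hi' v).2
  exact ⟨succGraph (· + 12), fun h => absurd h (by decide),
    fun _ => isOneFactor_succGraph hmatching,
    fun i => succGraph (factorSucc i), isDecompOn_of_existsUnique (by decide) (by decide),
    fun i hi => isCycleFactor_succGraph (htriangles i hi) le_rfl,
    fun i hi hi' => isCycleFactor_succGraph (hsquares i hi hi') (by norm_num)⟩
end

section
/- There exists a 2-factorization of K_24 minus a perfect matching into exactly 5 C_3-factors and 6 C_4-factors. That is, (5,6) ∈ HWP(24; 3, 4). -/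
open SimpleGraph

/-! ### Auxiliary machinery -/

/-- The graph determined by a "successor" function: `a ~ b` iff `f a = b` or `f b = a`
(and `a ≠ b`). -/
def Gr {V : Type*} (f : V → V) : SimpleGraph V :=
  SimpleGraph.fromRel (fun a b => f a = b)

lemma gr_adj {V : Type*} (f : V → V) (a b : V) :
    (Gr f).Adj a b ↔ a ≠ b ∧ (f a = b ∨ f b = a) :=
  SimpleGraph.fromRel_adj _ _ _

instance grDecidable {V : Type*} [DecidableEq V] (f : V → V) :
    DecidableRel (Gr f).Adj := fun a b =>
  decidable_of_iff' _ (gr_adj f a b)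

lemma oneFactor_gr {V : Type*} (f : V → V)
    (h1 : ∀ v, f v ≠ v) (h2 : ∀ v, f (f v) = v) : IsOneFactor (Gr f) := by
  intro v
  have : (Gr f).neighborSet v = {f v} := by
    ext w
    simp only [mem_neighborSet, gr_adj, Set.mem_singleton_iff]
    constructor
    · rintro ⟨hvw, h | h⟩
      · exact h.symm
      · rw [← h, h2]
    · rintro rfl
      exact ⟨fun h => h1 v h.symm, Or.inl rfl⟩
  rw [this, Set.ncard_singleton]

lemma reachable_iterate {V : Type*} (f : V → V) (h1 : ∀ v, f v ≠ v) :
    ∀ (n : ℕ) (v : V), (Gr f).Reachable v (f^[n] v) := by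
  intro n v
  induction n with
  | zero => exact Reachable.refl v
  | succ n ih =>
    refine ih.trans (Adj.reachable ?_)
    rw [Function.iterate_succ_apply']
    exact (gr_adj f _ _).mpr ⟨fun h => h1 _ h.symm, Or.inl rfl⟩

lemma walk_iterate {V : Type*} (f : V → V) (k : ℕ) (hk : 1 ≤ k)
    (h1 : ∀ v, f^[k] v = v) :
    ∀ {a w : V}, (Gr f).Walk a w → ∃ n, f^[n] a = w := by
  intro a w p
  induction p with
  | nil => exact ⟨0, rfl⟩
  | @cons a b w h _ ih =>
    obtain ⟨n, hn⟩ := ih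
    rcases (gr_adj f a b).mp h with ⟨-, hab | hab⟩
    · exact ⟨n + 1, by rw [Function.iterate_add_apply, Function.iterate_one, hab, hn]⟩
    · refine ⟨n + (k - 1), ?_⟩
      rw [Function.iterate_add_apply]
      have : f^[k - 1] a = b := by
        rw [← hab, ← Function.iterate_succ_apply, Nat.succ_eq_add_one,
          Nat.sub_add_cancel hk, h1]
      rw [this, hn]

lemma isCycleFactor_gr {V : Type*} [Fintype V] [DecidableEq V] (f : V → V) (k : ℕ)
    (hk : 3 ≤ k)
    (h1 : ∀ v, f^[k] v = v)
    (h2 : ∀ v, (Finset.image (fun i : Fin k => f^[(i : ℕ)] v) Finset.univ).card = k) :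
    IsCycleFactor (Gr f) k := by
  have hinj : ∀ v : V, Set.InjOn (fun i : Fin k => f^[(i : ℕ)] v)
      ↑(Finset.univ : Finset (Fin k)) := by
    intro v
    refine Finset.card_image_iff.mp ?_
    rw [h2, Finset.card_univ, Fintype.card_fin]
  have hiter_ne : ∀ (v : V) (i j : ℕ), i < k → j < k → i ≠ j → f^[i] v ≠ f^[j] v := by
    intro v i j hi hj hij hne
    have := hinj v (Finset.mem_coe.mpr (Finset.mem_univ (⟨i, hi⟩ : Fin k)))
      (Finset.mem_coe.mpr (Finset.mem_univ (⟨j, hj⟩ : Fin k))) hne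
    exact hij (congrArg Fin.val this)
  have hne : ∀ v, f v ≠ v := fun v h =>
    hiter_ne v 1 0 (by omega) (by omega) (by omega) (by simpa using h)
  have hne2 : ∀ v, f (f v) ≠ v := fun v h =>
    hiter_ne v 2 0 (by omega) (by omega) (by omega) (by simpa [Function.iterate_succ_apply'] using h)
  have hprev : ∀ v, f (f^[k - 1] v) = v := by
    intro v
    have := h1 v
    rwa [← Nat.sub_add_cancel (by omega : 1 ≤ k), Function.iterate_succ_apply'] at this
  have hprev' : ∀ v, f^[k - 1] (f v) = v := by
    intro v
    rw [← Function.iterate_succ_apply, Nat.succ_eq_add_one, Nat.sub_add_cancel (by omega), h1]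
  constructor
  · -- degree 2
    intro v
    have hns : (Gr f).neighborSet v = {f v, f^[k - 1] v} := by
      ext w
      simp only [mem_neighborSet, gr_adj, Set.mem_insert_iff, Set.mem_singleton_iff]
      constructor
      · rintro ⟨hvw, h | h⟩
        · exact Or.inl h.symm
        · right; rw [← h, hprev']
      · rintro (rfl | rfl)
        · exact ⟨fun h => hne v h.symm, Or.inl rfl⟩
        · exact ⟨fun h => hne v ((congrArg f h).trans (hprev v)), Or.inr (hprev v)⟩
    rw [hns]
    refine Set.ncard_pair ?_
    intro h
    exact hne2 v (by rw [h, hprev])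
  · -- components
    intro v
    have hsupp : ((Gr f).connectedComponentMk v).supp
        = ↑(Finset.image (fun i : Fin k => f^[(i : ℕ)] v) Finset.univ) := by
      ext w
      simp only [ConnectedComponent.mem_supp_iff, ConnectedComponent.eq, Finset.coe_image,
        Finset.coe_univ, Set.image_univ, Set.mem_range]
      constructor
      · intro h
        obtain ⟨p⟩ := h.symm
        obtain ⟨n, hn⟩ := walk_iterate f k (by omega) h1 p
        refine ⟨⟨n % k, Nat.mod_lt _ (by omega)⟩, ?_⟩
        have : f^[n] v = f^[n % k] v := by
          conv_lhs => rw [← Nat.div_add_mod n k]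
          rw [Nat.add_comm, Function.iterate_add_apply, Function.iterate_mul,
            Function.iterate_fixed (h1 v)]
        simpa [← this] using hn
      · rintro ⟨i, rfl⟩
        exact ((reachable_iterate f hne (i : ℕ) v).symm)
    rw [hsupp, Set.ncard_coe_finset, h2]

lemma disjoint_edgeSet_of {V : Type*} {G H : SimpleGraph V}
    (h : ∀ a b, G.Adj a b → ¬H.Adj a b) : Disjoint G.edgeSet H.edgeSet := by
  rw [Set.disjoint_left]
  intro e he he'
  induction e with
  | _ a b =>
    rw [mem_edgeSet] at he he'
    exact h a b he he'

lemma exists_lt_11 (P : ℕ → Prop) : (∃ i, i < 11 ∧ P i) ↔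
    P 0 ∨ P 1 ∨ P 2 ∨ P 3 ∨ P 4 ∨ P 5 ∨ P 6 ∨ P 7 ∨ P 8 ∨ P 9 ∨ P 10 := by
  constructor
  · rintro ⟨i, hi, h⟩
    interval_cases i <;> tauto
  · rintro (h | h | h | h | h | h | h | h | h | h | h)
    exacts [⟨0, by omega, h⟩, ⟨1, by omega, h⟩, ⟨2, by omega, h⟩, ⟨3, by omega, h⟩,
      ⟨4, by omega, h⟩, ⟨5, by omega, h⟩, ⟨6, by omega, h⟩, ⟨7, by omega, h⟩,
      ⟨8, by omega, h⟩, ⟨9, by omega, h⟩, ⟨10, by omega, h⟩]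

/-! ### The explicit decomposition data -/

def pm : Fin 24 → Fin 24 := fun v => v + 12

def p0 : Fin 24 → Fin 24 := ![2, 12, 13, 8, 9, 16, 10, 15, 19, 17, 11, 6, 14, 0, 1, 20, 21, 4, 22, 3, 7, 5, 23, 18]
def p1 : Fin 24 → Fin 24 := ![3, 10, 12, 14, 8, 13, 7, 23, 21, 16, 17, 18, 15, 22, 0, 2, 20, 1, 19, 11, 9, 4, 5, 6]
def p2 : Fin 24 → Fin 24 := ![16, 6, 3, 7, 5, 12, 22, 2, 9, 23, 13, 20, 4, 18, 15, 19, 17, 0, 10, 14, 21, 11, 1, 8]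
def p3 : Fin 24 → Fin 24 := ![4, 2, 18, 12, 15, 9, 13, 8, 11, 10, 5, 7, 16, 14, 6, 0, 3, 21, 1, 20, 23, 22, 17, 19]
def p4 : Fin 24 → Fin 24 := ![1, 5, 6, 4, 20, 0, 19, 14, 15, 11, 21, 22, 13, 17, 18, 16, 8, 12, 7, 2, 3, 23, 9, 10]
def p5 : Fin 24 → Fin 24 := ![6, 3, 4, 13, 14, 11, 12, 9, 10, 19, 20, 17, 18, 15, 16, 1, 2, 23, 0, 21, 22, 7, 8, 5]
def p6 : Fin 24 → Fin 24 := ![7, 4, 10, 11, 13, 8, 9, 12, 17, 18, 14, 15, 19, 16, 22, 23, 1, 20, 21, 0, 5, 6, 2, 3]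
def p7 : Fin 24 → Fin 24 := ![8, 7, 9, 10, 11, 6, 17, 13, 12, 14, 15, 16, 20, 19, 21, 22, 23, 18, 5, 1, 0, 2, 3, 4]
def p8 : Fin 24 → Fin 24 := ![9, 8, 11, 5, 6, 15, 16, 10, 13, 12, 19, 14, 21, 20, 23, 17, 18, 3, 4, 22, 1, 0, 7, 2]
def p9 : Fin 24 → Fin 24 := ![10, 11, 5, 9, 7, 14, 8, 16, 18, 15, 12, 13, 22, 23, 17, 21, 19, 2, 20, 4, 6, 3, 0, 1]
def p10 : Fin 24 → Fin 24 := ![11, 9, 8, 6, 10, 7, 15, 17, 14, 13, 16, 12, 23, 21, 20, 18, 22, 19, 3, 5, 2, 1, 4, 0]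

def Fs : ℕ → SimpleGraph (Fin 24) := fun i =>
  match i with
  | 0 => Gr p0
  | 1 => Gr p1
  | 2 => Gr p2
  | 3 => Gr p3
  | 4 => Gr p4
  | 5 => Gr p5
  | 6 => Gr p6
  | 7 => Gr p7
  | 8 => Gr p8
  | 9 => Gr p9
  | 10 => Gr p10
  | _ => ⊥

instance FsDecidable : ∀ i : ℕ, DecidableRel (Fs i).Adj := fun i =>
  match i with
  | 0 => grDecidable p0
  | 1 => grDecidable p1
  | 2 => grDecidable p2
  | 3 => grDecidable p3
  | 4 => grDecidable p4
  | 5 => grDecidable p5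
  | 6 => grDecidable p6
  | 7 => grDecidable p7
  | 8 => grDecidable p8
  | 9 => grDecidable p9
  | 10 => grDecidable p10
  | (_ + 11) => fun _ _ => Decidable.isFalse (by simp [Fs])

set_option maxHeartbeats 12000000 in
theorem stmt_3 : HW 24 3 4 5 6 := by
  refine ⟨Gr pm, fun h => absurd (Nat.odd_iff.mp h) (by norm_num), fun _ =>
    oneFactor_gr pm (by decide) (by decide), Fs, ⟨?_, ?_, ?_⟩, ?_, ?_⟩
  · -- subgraphs
    intro i hi
    interval_cases i
    · exact fun a b h => (by decide : ∀ a b : Fin 24, (Gr p0).Adj a b → ((⊤ : SimpleGraph (Fin 24)) \ Gr pm).Adj a b) a b h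
    · exact fun a b h => (by decide : ∀ a b : Fin 24, (Gr p1).Adj a b → ((⊤ : SimpleGraph (Fin 24)) \ Gr pm).Adj a b) a b h
    · exact fun a b h => (by decide : ∀ a b : Fin 24, (Gr p2).Adj a b → ((⊤ : SimpleGraph (Fin 24)) \ Gr pm).Adj a b) a b h
    · exact fun a b h => (by decide : ∀ a b : Fin 24, (Gr p3).Adj a b → ((⊤ : SimpleGraph (Fin 24)) \ Gr pm).Adj a b) a b h
    · exact fun a b h => (by decide : ∀ a b : Fin 24, (Gr p4).Adj a b → ((⊤ : SimpleGraph (Fin 24)) \ Gr pm).Adj a b) a b h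
    · exact fun a b h => (by decide : ∀ a b : Fin 24, (Gr p5).Adj a b → ((⊤ : SimpleGraph (Fin 24)) \ Gr pm).Adj a b) a b h
    · exact fun a b h => (by decide : ∀ a b : Fin 24, (Gr p6).Adj a b → ((⊤ : SimpleGraph (Fin 24)) \ Gr pm).Adj a b) a b h
    · exact fun a b h => (by decide : ∀ a b : Fin 24, (Gr p7).Adj a b → ((⊤ : SimpleGraph (Fin 24)) \ Gr pm).Adj a b) a b h
    · exact fun a b h => (by decide : ∀ a b : Fin 24, (Gr p8).Adj a b → ((⊤ : SimpleGraph (Fin 24)) \ Gr pm).Adj a b) a b h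
    · exact fun a b h => (by decide : ∀ a b : Fin 24, (Gr p9).Adj a b → ((⊤ : SimpleGraph (Fin 24)) \ Gr pm).Adj a b) a b h
    · exact fun a b h => (by decide : ∀ a b : Fin 24, (Gr p10).Adj a b → ((⊤ : SimpleGraph (Fin 24)) \ Gr pm).Adj a b) a b h
  · -- pairwise disjoint
    intro i hi j hj hne
    interval_cases i <;> interval_cases j <;>
      first
        | exact absurd rfl hne
        | exact disjoint_edgeSet_of (by decide)
  · -- edge cover
    ext e
    induction e with
    | _ a b =>
      simp only [Set.mem_iUnion, Set.mem_Iio, exists_prop, mem_edgeSet]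
      rw [exists_lt_11 (fun i => (Fs i).Adj a b)]
      exact (by decide : ∀ a b : Fin 24,
        ((⊤ : SimpleGraph (Fin 24)) \ Gr pm).Adj a b ↔
          (Gr p0).Adj a b ∨ (Gr p1).Adj a b ∨ (Gr p2).Adj a b ∨ (Gr p3).Adj a b ∨
          (Gr p4).Adj a b ∨ (Gr p5).Adj a b ∨ (Gr p6).Adj a b ∨ (Gr p7).Adj a b ∨
          (Gr p8).Adj a b ∨ (Gr p9).Adj a b ∨ (Gr p10).Adj a b) a b
  · -- triangle factors
    intro i hi
    interval_cases i
    · exact isCycleFactor_gr p0 3 (by omega) (by decide) (by decide)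
    · exact isCycleFactor_gr p1 3 (by omega) (by decide) (by decide)
    · exact isCycleFactor_gr p2 3 (by omega) (by decide) (by decide)
    · exact isCycleFactor_gr p3 3 (by omega) (by decide) (by decide)
    · exact isCycleFactor_gr p4 3 (by omega) (by decide) (by decide)
  · -- C4 factors
    intro i hi hi'
    interval_cases i
    · exact isCycleFactor_gr p5 4 (by omega) (by decide) (by decide)
    · exact isCycleFactor_gr p6 4 (by omega) (by decide) (by decide)
    · exact isCycleFactor_gr p7 4 (by omega) (by decide) (by decide)
    · exact isCycleFactor_gr p8 4 (by omega) (by decide) (by decide)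
    · exact isCycleFactor_gr p9 4 (by omega) (by decide) (by decide)
    · exact isCycleFactor_gr p10 4 (by omega) (by decide) (by decide)
end

section
/- Suppose there exists a decomposition of the edge set of the complete u-partite graph K_u[g] (with parts of size g; together with a 1-factor removed when g(u-1) is odd) into α C_m-factors and β C_n-factors, and there exists an HW(g; m, n, α', β'). Then there exists an HW(gu; m, n, α + α', β + β'). -/
open SimpleGraph

/-- `HW(K_u[g]; m, n, α, β)`: a partition of `E(K_u[g])` (minus a 1-factor when
`g (u - 1)` is odd) into `α` `C_m`-factors and `β` `C_n`-factors. -/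
def HWMultipartite (u g m n α β : ℕ) : Prop :=
  ∃ I : SimpleGraph (Fin u × Fin g),
    (¬ Odd (g * (u - 1)) → I = ⊥) ∧ (Odd (g * (u - 1)) → IsOneFactor I) ∧
    IsHWGraph (Kpartite u g \ I) m n α β


/-!
Identify the vertex set of `K_{gu}` with `Fin u × Fin g`. Its edges are those of `K_u[g]`
(between parts) together with those of `u` disjoint copies of `K_g` (inside the parts), i.e. of
`⊥ □ K_g`. Placing the given `HW(g)` on every part at once turns each `C_k`-factor of `K_g` into a
`C_k`-factor of `⊥ □ K_g`, and these together with the factors of `K_u[g]` decompose `K_{gu}`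
minus the union of the two removed graphs. That union is empty when `gu` is odd and a 1-factor
when `gu` is even, since `g (u - 1)` is odd exactly when `g` is odd and `u` is even and positive.

The one subtle point is that the 1-factor removed from `K_u[g]` must lie inside `K_u[g]`: if it
contained an edge inside a part, an endpoint of that edge would keep its full degree `g (u - 1)`,
which is odd, whereas a union of 2-factors has even degrees.
-/

variable {V W U : Type*}

theorem Nat.iSup_lt_add {α : Type*} [CompleteLattice α] (f : ℕ → α) (a b : ℕ) :
    ⨆ i < a + b, f i = (⨆ i < a, f i) ⊔ ⨆ j < b, f (a + j) := by
  induction b with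
  | zero => simp
  | succ b ih => rw [← add_assoc, Nat.iSup_lt_succ, ih, Nat.iSup_lt_succ, sup_assoc]

theorem isDecompOn_iff {G : SimpleGraph V} {F : ℕ → SimpleGraph V} {N : ℕ} :
    IsDecompOn G F N ↔
      (∀ i < N, ∀ j < N, i ≠ j → Disjoint (F i) (F j)) ∧ G = ⨆ i < N, F i := by
  simp only [IsDecompOn, disjoint_edgeSet, Set.mem_Iio, ← edgeSet_iSup, edgeSet_inj]
  refine ⟨fun h => h.2, fun h => ⟨fun i hi => h.2 ▸ le_iSup₂ (f := fun i _ => F i) i hi, h⟩⟩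

namespace IsDecompOn

variable {G G' : SimpleGraph V} {F F' : ℕ → SimpleGraph V} {N N' : ℕ}

theorem append (hF : IsDecompOn G F N) (hF' : IsDecompOn G' F' N') (h : Disjoint G G') :
    IsDecompOn (G ⊔ G') (fun i => if i < N then F i else F' (i - N)) (N + N') := by
  rw [isDecompOn_iff] at *
  obtain ⟨hF, rfl⟩ := hF
  obtain ⟨hF', rfl⟩ := hF'
  refine ⟨fun i hi j hj hij => ?_, ?_⟩
  · have hle : ∀ k < N, F k ≤ ⨆ i < N, F i := fun k hk => le_iSup₂ (f := fun i _ => F i) k hk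
    have hle' : ∀ k < N', F' k ≤ ⨆ i < N', F' i := fun k hk => le_iSup₂ (f := fun i _ => F' i) k hk
    split_ifs with hi' hj' hj'
    · exact hF i hi' j hj' hij
    · exact h.mono (hle i hi') (hle' _ (by omega))
    · exact h.symm.mono (hle' _ (by omega)) (hle j hj')
    · exact hF' _ (by omega) _ (by omega) (by omega)
  · rw [Nat.iSup_lt_add]
    congr 1
    · exact biSup_congr fun i hi => (if_pos hi).symm
    · exact biSup_congr fun j _ => by simp

theorem split (h : IsDecompOn G F (N + N')) :
    ∃ G₁ G₂, IsDecompOn G₁ F N ∧ IsDecompOn G₂ (fun j => F (N + j)) N' ∧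
      Disjoint G₁ G₂ ∧ G = G₁ ⊔ G₂ := by
  rw [isDecompOn_iff] at h
  obtain ⟨hF, rfl⟩ := h
  refine ⟨_, _, isDecompOn_iff.2 ⟨fun i hi j hj => hF i (by omega) j (by omega), rfl⟩,
    isDecompOn_iff.2 ⟨fun i hi j hj hij => hF _ (by omega) _ (by omega) (by omega), rfl⟩,
    ?_, Nat.iSup_lt_add F N N'⟩
  simp only [disjoint_iSup_iff, iSup_disjoint_iff]
  exact fun j hj i hi => hF i (by omega) _ (by omega) (by omega)

theorem comap_inf (f : V → W) (K : SimpleGraph V) {G : SimpleGraph W} {F : ℕ → SimpleGraph W}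
    (h : IsDecompOn G F N) :
    IsDecompOn (G.comap f ⊓ K) (fun i => (F i).comap f ⊓ K) N := by
  rw [isDecompOn_iff] at *
  obtain ⟨hF, rfl⟩ := h
  refine ⟨fun i hi j hj hij => ?_, ?_⟩
  · have := hF i hi j hj hij
    rw [disjoint_left] at this ⊢
    exact fun x y hx hy => this _ _ hx.1 hy.1
  · ext x y
    simp only [inf_adj, comap_adj, iSup_adj]
    aesop

theorem ncard_neighborSet [Finite V] {d : ℕ} (h : IsDecompOn G F N)
    (hF : ∀ i < N, ∀ v, ((F i).neighborSet v).ncard = d) (v : V) :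
    (G.neighborSet v).ncard = N * d := by
  rw [isDecompOn_iff] at h
  obtain ⟨hdisj, rfl⟩ := h
  have hpw : (Set.Iio N).PairwiseDisjoint fun i => (F i).neighborSet v :=
    fun i hi j hj hij => disjoint_neighborSet.2 (hdisj i hi j hj hij) v
  simp only [neighborSet_iSup]
  change (⋃ i ∈ Set.Iio N, (F i).neighborSet v).ncard = N * d
  rw [(Set.finite_Iio N).ncard_biUnion (fun _ _ => Set.toFinite _) hpw,
    finsum_mem_congr (s := Set.Iio N) rfl fun i hi => hF i hi v, ← Finset.coe_range,
    finsum_mem_coe_finset]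
  simp

end IsDecompOn

def IsCycleDecomp (G : SimpleGraph V) (k N : ℕ) : Prop :=
  ∃ F : ℕ → SimpleGraph V, IsDecompOn G F N ∧ ∀ i < N, IsCycleFactor (F i) k

theorem IsCycleDecomp.sup {A B : SimpleGraph V} {k N N' : ℕ} (hA : IsCycleDecomp A k N)
    (hB : IsCycleDecomp B k N') (h : Disjoint A B) : IsCycleDecomp (A ⊔ B) k (N + N') := by
  obtain ⟨F, hF, hFk⟩ := hA
  obtain ⟨F', hF', hF'k⟩ := hB
  refine ⟨_, hF.append hF' h, fun i hi => ?_⟩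
  split_ifs with hiN
  · exact hFk i hiN
  · exact hF'k _ (by omega)

theorem isHWGraph_iff {G : SimpleGraph V} {m n α β : ℕ} :
    IsHWGraph G m n α β ↔
      ∃ A B, Disjoint A B ∧ G = A ⊔ B ∧ IsCycleDecomp A m α ∧ IsCycleDecomp B n β := by
  constructor
  · rintro ⟨F, hF, hFm, hFn⟩
    obtain ⟨A, B, hA, hB, hAB, rfl⟩ := hF.split
    exact ⟨A, B, hAB, rfl, ⟨F, hA, hFm⟩,
      ⟨_, hB, fun j hj => hFn _ (Nat.le_add_right α j) (by omega)⟩⟩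
  · rintro ⟨A, B, hAB, rfl, ⟨F, hF, hFm⟩, ⟨F', hF', hF'n⟩⟩
    refine ⟨_, hF.append hF' hAB, fun i hi => by simpa [hi] using hFm i hi, fun i hi hi' => ?_⟩
    simpa [Nat.not_lt.2 hi] using hF'n (i - α) (by omega)

theorem IsHWGraph.sup {A B : SimpleGraph V} {m n α β α' β' : ℕ} (hA : IsHWGraph A m n α β)
    (hB : IsHWGraph B m n α' β') (h : Disjoint A B) :
    IsHWGraph (A ⊔ B) m n (α + α') (β + β') := by
  obtain ⟨Am, An, hdA, rfl, hAm, hAn⟩ := isHWGraph_iff.1 hA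
  obtain ⟨Bm, Bn, hdB, rfl, hBm, hBn⟩ := isHWGraph_iff.1 hB
  simp only [disjoint_sup_left, disjoint_sup_right] at h
  refine isHWGraph_iff.2 ⟨Am ⊔ Bm, An ⊔ Bn, ?_, sup_sup_sup_comm _ _ _ _,
    hAm.sup hBm h.1.1, hAn.sup hBn h.2.2⟩
  simp only [disjoint_sup_left, disjoint_sup_right]
  exact ⟨⟨hdA, h.1.2.symm⟩, ⟨h.2.1, hdB⟩⟩

theorem IsHWGraph.ncard_neighborSet [Finite V] {G : SimpleGraph V} {m n α β : ℕ}
    (h : IsHWGraph G m n α β) (v : V) : (G.neighborSet v).ncard = (α + β) * 2 := by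
  obtain ⟨F, hF, hFm, hFn⟩ := h
  refine hF.ncard_neighborSet (fun i hi w => ?_) v
  rcases Nat.lt_or_ge i α with hiα | hiα
  · exact (hFm i hiα).1 w
  · exact (hFn i hiα hi).1 w

theorem SimpleGraph.Iso.ncard_neighborSet {G : SimpleGraph V} {G' : SimpleGraph W}
    (φ : G ≃g G') (v : V) : (G'.neighborSet (φ v)).ncard = (G.neighborSet v).ncard := by
  rw [← φ.toEmbedding.preimage_neighborSet v,
    Set.ncard_preimage_of_injective_subset_range φ.toEmbedding.injective]
  · rfl
  · exact fun w _ => ⟨φ.symm w, by simp⟩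

theorem SimpleGraph.Iso.ncard_supp_connectedComponentMk {G : SimpleGraph V}
    {G' : SimpleGraph W} (φ : G ≃g G') (v : V) :
    (G'.connectedComponentMk (φ v)).supp.ncard = (G.connectedComponentMk v).supp.ncard := by
  have : φ ⁻¹' (G'.connectedComponentMk (φ v)).supp = (G.connectedComponentMk v).supp := by
    ext w
    simp [ConnectedComponent.eq, Iso.reachable_iff]
  rw [← this, Set.ncard_preimage_of_injective_subset_range φ.injective (by simp)]

theorem IsCycleFactor.of_iso {G : SimpleGraph V} {G' : SimpleGraph W} {k : ℕ} (φ : G ≃g G')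
    (h : IsCycleFactor G' k) : IsCycleFactor G k :=
  ⟨fun v => φ.ncard_neighborSet v ▸ h.1 (φ v),
    fun v => φ.ncard_supp_connectedComponentMk v ▸ h.2 (φ v)⟩

theorem IsOneFactor.of_iso {G : SimpleGraph V} {G' : SimpleGraph W} (φ : G ≃g G')
    (h : IsOneFactor G') : IsOneFactor G :=
  fun v => φ.ncard_neighborSet v ▸ h (φ v)

theorem IsHWGraph.comap_equiv {G : SimpleGraph W} {m n α β : ℕ} (e : V ≃ W)
    (h : IsHWGraph G m n α β) : IsHWGraph (G.comap e) m n α β := by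
  obtain ⟨F, hF, hFm, hFn⟩ := h
  refine ⟨fun i => (F i).comap e, by simpa using hF.comap_inf e ⊤,
    fun i hi => (hFm i hi).of_iso (Iso.comap e _),
    fun i hi hi' => (hFn i hi hi').of_iso (Iso.comap e _)⟩

theorem ncard_neighborSet_bot_boxProd (H : SimpleGraph V) (x : U × V) :
    (((⊥ : SimpleGraph U) □ H).neighborSet x).ncard = (H.neighborSet x.2).ncard := by
  rw [neighborSet_boxProd, neighborSet_bot, Set.empty_prod, Set.empty_union, Set.singleton_prod,
    Set.ncard_image_of_injective _ (Prod.mk_right_injective x.1)]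

theorem ncard_supp_bot_boxProd (H : SimpleGraph V) (x : U × V) :
    (((⊥ : SimpleGraph U) □ H).connectedComponentMk x).supp.ncard
      = (H.connectedComponentMk x.2).supp.ncard := by
  have : (((⊥ : SimpleGraph U) □ H).connectedComponentMk x).supp
      = Prod.mk x.1 '' (H.connectedComponentMk x.2).supp := by
    ext ⟨a, w⟩
    simp [ConnectedComponent.eq, reachable_boxProd, reachable_bot, eq_comm, reachable_comm, and_comm]
  rw [this, Set.ncard_image_of_injective _ (Prod.mk_right_injective x.1)]

theorem IsCycleFactor.bot_boxProd {H : SimpleGraph V} {k : ℕ} (h : IsCycleFactor H k) :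
    IsCycleFactor ((⊥ : SimpleGraph U) □ H) k :=
  ⟨fun x => (ncard_neighborSet_bot_boxProd H x).trans (h.1 x.2),
    fun x => (ncard_supp_bot_boxProd H x).trans (h.2 x.2)⟩

theorem IsOneFactor.bot_boxProd {H : SimpleGraph V} (h : IsOneFactor H) :
    IsOneFactor ((⊥ : SimpleGraph U) □ H) :=
  fun x => (ncard_neighborSet_bot_boxProd H x).trans (h x.2)

-- Without the parentheses `□` would be read as the pushout-product notation of category theory.
theorem bot_boxProd_eq_comap_inf (H : SimpleGraph V) :
    ((⊥ : SimpleGraph U) □ H) = H.comap Prod.snd ⊓ ((⊥ : SimpleGraph U) □ (⊤ : SimpleGraph V)) := by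
  ext x y
  simp only [boxProd_adj, bot_adj, false_and, false_or, inf_adj, comap_adj, top_adj]
  exact ⟨fun h => ⟨h.1, h.1.ne, h.2⟩, fun h => ⟨h.1, h.2.2⟩⟩

theorem IsHWGraph.bot_boxProd {H : SimpleGraph V} {m n α β : ℕ} (h : IsHWGraph H m n α β) :
    IsHWGraph ((⊥ : SimpleGraph U) □ H) m n α β := by
  obtain ⟨F, hF, hFm, hFn⟩ := h
  refine ⟨fun i => (⊥ : SimpleGraph U) □ F i, ?_,
    fun i hi => (hFm i hi).bot_boxProd, fun i hi hi' => (hFn i hi hi').bot_boxProd⟩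
  have hF' := hF.comap_inf Prod.snd ((⊥ : SimpleGraph U) □ (⊤ : SimpleGraph V))
  rwa [← bot_boxProd_eq_comap_inf, funext fun i => (bot_boxProd_eq_comap_inf (F i)).symm] at hF'

theorem bot_boxProd_bot : ((⊥ : SimpleGraph U) □ (⊥ : SimpleGraph V)) = ⊥ := by
  ext x y
  simp

theorem IsOneFactor.le_of_even_sdiff {G I : SimpleGraph V} (hI : IsOneFactor I)
    (hG : ∀ v, Odd (G.neighborSet v).ncard) (hGI : ∀ v, Even ((G \ I).neighborSet v).ncard) :
    I ≤ G := by
  intro p q hpq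
  by_contra hpq'
  obtain ⟨r, hr⟩ := Set.ncard_eq_one.1 (hI p)
  have hqr : q = r := by simpa [hr] using (show q ∈ I.neighborSet p from hpq)
  have hsame : (G \ I).neighborSet p = G.neighborSet p := by
    rw [neighborSet_sdiff, hr, ← hqr]
    exact Set.sdiff_singleton_eq_self hpq'
  exact Nat.not_even_iff_odd.2 (hG p) (hsame ▸ hGI p)

theorem Kpartite_adj {u g : ℕ} {p q : Fin u × Fin g} : (Kpartite u g).Adj p q ↔ p.1 ≠ q.1 := by
  simp only [Kpartite, fromRel_adj, ne_eq, ne_comm (a := q.1), or_self, and_iff_right_iff_imp]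
  exact fun h hpq => h (congrArg Prod.fst hpq)

theorem ncard_neighborSet_Kpartite (u g : ℕ) (p : Fin u × Fin g) :
    ((Kpartite u g).neighborSet p).ncard = g * (u - 1) := by
  have : (Kpartite u g).neighborSet p = ({p.1}ᶜ : Set (Fin u)) ×ˢ Set.univ := by
    ext q
    simp [Kpartite_adj, ne_comm]
  rw [this, Set.ncard_prod, Set.ncard_compl, Set.ncard_singleton, Set.ncard_univ, Nat.card_fin,
    Nat.card_fin, Nat.mul_comm]

theorem disjoint_Kpartite_bot_boxProd {u g : ℕ} (H : SimpleGraph (Fin g)) :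
    Disjoint (Kpartite u g) ((⊥ : SimpleGraph (Fin u)) □ H) := by
  rw [disjoint_left]
  rintro x y hxy (⟨⟨⟩, -⟩ | ⟨-, h⟩)
  exact Kpartite_adj.1 hxy h

theorem top_sdiff_sup_bot_boxProd {u g : ℕ} {I : SimpleGraph (Fin u × Fin g)}
    (hI : I ≤ Kpartite u g) (I' : SimpleGraph (Fin g)) :
    ⊤ \ (I ⊔ ((⊥ : SimpleGraph (Fin u)) □ I'))
      = (Kpartite u g \ I) ⊔ ((⊥ : SimpleGraph (Fin u)) □ (⊤ \ I')) := by
  ext p q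
  have hIpq : I.Adj p q → p.1 ≠ q.1 := fun h => Kpartite_adj.1 (hI h)
  simp only [sdiff_adj, sup_adj, top_adj, boxProd_adj, bot_adj, false_and, false_or,
    Kpartite_adj, ne_eq, Prod.ext_iff]
  tauto

theorem le_Kpartite_of_isHWGraph_sdiff {u g m n α β : ℕ} {I : SimpleGraph (Fin u × Fin g)}
    (hI_bot : ¬ Odd (g * (u - 1)) → I = ⊥) (hI_one : Odd (g * (u - 1)) → IsOneFactor I)
    (h : IsHWGraph (Kpartite u g \ I) m n α β) : I ≤ Kpartite u g := by
  by_cases hodd : Odd (g * (u - 1))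
  · refine (hI_one hodd).le_of_even_sdiff (fun p => ?_) (fun p => ?_)
    · rwa [ncard_neighborSet_Kpartite]
    · rw [h.ncard_neighborSet]
      exact even_two.mul_left _
  · rw [hI_bot hodd]
    exact bot_le

theorem HW.of_equiv {v m n α β : ℕ} (e : Fin v ≃ V) (I : SimpleGraph V)
    (hI_bot : Odd v → I = ⊥) (hI_one : Even v → IsOneFactor I)
    (h : IsHWGraph (⊤ \ I) m n α β) : HW v m n α β := by
  refine ⟨I.comap e, fun hv => by rw [hI_bot hv]; rfl,
    fun hv => (hI_one hv).of_iso (Iso.comap e I), ?_⟩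
  have htop : (⊤ : SimpleGraph (Fin v)) \ I.comap e = (⊤ \ I).comap e := by
    ext x y
    simp [e.injective.ne_iff]
  rw [htop]
  exact h.comap_equiv e

theorem stmt_6 (u g m n α β α' β' : ℕ)
    (h1 : HWMultipartite u g m n α β) (h2 : HW g m n α' β') :
    HW (g * u) m n (α + α') (β + β') := by
  obtain ⟨I, hI_bot, hI_one, hK⟩ := h1
  obtain ⟨I', hI'_bot, hI'_one, hK'⟩ := h2
  have hIK : I ≤ Kpartite u g := le_Kpartite_of_isHWGraph_sdiff hI_bot hI_one hK
  refine HW.of_equiv ((finCongr (Nat.mul_comm g u)).trans finProdFinEquiv.symm)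
    (I ⊔ ((⊥ : SimpleGraph (Fin u)) □ I')) (fun hodd => ?_) (fun heven => ?_) ?_
  · obtain ⟨hg, hu⟩ := Nat.odd_mul.1 hodd
    rw [hI_bot (Nat.not_odd_iff_even.2 ((Nat.Odd.sub_odd hu odd_one).mul_left g)), hI'_bot hg,
      bot_boxProd_bot, sup_bot_eq]
  · rcases Nat.even_or_odd g with hg | hg
    · rw [hI_bot (Nat.not_odd_iff_even.2 (hg.mul_right _)), bot_sup_eq]
      exact (hI'_one hg).bot_boxProd
    · rw [hI'_bot hg, bot_boxProd_bot, sup_bot_eq]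
      rcases u.eq_zero_or_pos with rfl | hu
      · exact fun p => p.1.elim0
      · have hu_even := (Nat.even_mul.1 heven).resolve_left (Nat.not_even_iff_odd.2 hg)
        exact hI_one (Nat.odd_mul.2 ⟨hg, Nat.Even.sub_odd hu hu_even odd_one⟩)
  · rw [top_sdiff_sup_bot_boxProd hIK]
    exact hK.sup hK'.bot_boxProd ((disjoint_Kpartite_bot_boxProd _).mono_left sdiff_le)
end

section
/- There exists an incomplete Hamilton-Waterloo design IHW(45, 15; 3, 5, 15, 0, 6, 1): a decomposition of K_45 − E(K_15) into 15 C_3-factors on all 45 vertices, 6 holey C_3-factors, and 1 holey C_5-factor (each holey factor covering exactly the 30 vertices outside the hole). -/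
open SimpleGraph

/-- A holey `C_k`-factor of the complete multipartite graph with respect to the
part `i`: it covers exactly the vertices outside part `i`, is 2-regular there,
and all of its components have `k` vertices. -/
def IsHoleyCycleFactor {u g : ℕ} (H : SimpleGraph (Fin u × Fin g)) (i : Fin u) (k : ℕ) : Prop :=
  (∀ v, v.1 ≠ i → (H.neighborSet v).ncard = 2) ∧
  (∀ v, v.1 = i → (H.neighborSet v).ncard = 0) ∧
  (∀ v, v.1 ≠ i → (H.connectedComponentMk v).supp.ncard = k)

/-- A cycle frame `CF(g^u; m, n, α, β)`: a partition of `E(K_u[g])` into holey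
2-factors such that with respect to each part there are exactly `α` holey
`C_m`-factors and `β` holey `C_n`-factors. -/
def IsCF (u g m n α β : ℕ) : Prop :=
  ∃ F : Fin u → ℕ → SimpleGraph (Fin u × Fin g),
    (∀ i, ∀ j < α + β, F i j ≤ Kpartite u g) ∧
    (∀ i, ∀ j < α + β, ∀ i', ∀ j' < α + β, (i, j) ≠ (i', j') →
      Disjoint (F i j).edgeSet (F i' j').edgeSet) ∧
    ((Kpartite u g).edgeSet = ⋃ i, ⋃ j ∈ Set.Iio (α + β), (F i j).edgeSet) ∧
    (∀ i, ∀ j < α, IsHoleyCycleFactor (F i j) i m) ∧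
    (∀ i j, α ≤ j → j < α + β → IsHoleyCycleFactor (F i j) i n)

/-- The complete graph `K_v` minus the edges of the complete subgraph on the
first `h` vertices (the hole). -/
def KminusHole (v h : ℕ) : SimpleGraph (Fin v) :=
  SimpleGraph.fromRel (fun a b => ¬ (a.val < h ∧ b.val < h))

/-- A holey `C_k`-factor with respect to the hole consisting of the first `h`
vertices of `Fin v`. -/
def IsHoleyCycleFactorFin {v : ℕ} (H : SimpleGraph (Fin v)) (h k : ℕ) : Prop :=
  (∀ x : Fin v, h ≤ x.val → (H.neighborSet x).ncard = 2) ∧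
  (∀ x : Fin v, x.val < h → (H.neighborSet x).ncard = 0) ∧
  (∀ x : Fin v, h ≤ x.val → (H.connectedComponentMk x).supp.ncard = k)

/-- An incomplete Hamilton–Waterloo design `IHW(v, h; m, n, α, β, α', β')`:
a decomposition of `K_v − E(K_h)` (minus a 1-factor on the `v - h` non-hole
vertices when `v` is even) into `α` `C_m`-factors and `β` `C_n`-factors of `K_v`,
and `α'` holey `C_m`-factors and `β'` holey `C_n`-factors missing the hole. -/
def IsIHW (v h m n α β α' β' : ℕ) : Prop :=
  ∃ I : SimpleGraph (Fin v), ∃ F : ℕ → SimpleGraph (Fin v),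
    (Odd v → I = ⊥) ∧
    (Even v → ∀ x : Fin v, (I.neighborSet x).ncard = if x.val < h then 0 else 1) ∧
    IsDecompOn (KminusHole v h \ I) F (α + β + α' + β') ∧
    (∀ i < α, IsCycleFactor (F i) m) ∧
    (∀ i, α ≤ i → i < α + β → IsCycleFactor (F i) n) ∧
    (∀ i, α + β ≤ i → i < α + β + α' → IsHoleyCycleFactorFin (F i) h m) ∧
    (∀ i, α + β + α' ≤ i → i < α + β + α' + β' → IsHoleyCycleFactorFin (F i) h n)

/-!
Identify the 30 vertices outside the hole with `ℤ/30` and write `∞₀, …, ∞₁₄` for the hole.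
The six holey triangle factors are the developments of the base triangles `{0, 4, 14}` and
`{0, 2, 7}` by the subgroup `3ℤ/30` (one factor per coset, as each base triangle meets every
residue class mod 3), and the holey pentagon factor consists of the cosets of `⟨6⟩`; together they
use the differences `±2, ±4, ±5, ±6, ±7, ±10, ±14`. The remaining edges, of differences
`±1, ±3, ±8, ±9, ±11, ±12, ±13, 15` together with all edges at the hole, form the 15 triangle
factors: the orbit of a single one, `{∞ᵢ, aᵢ, bᵢ}` with the `aᵢbᵢ` a perfect matching, under the
automorphism `σ : ∞ᵢ ↦ ∞ᵢ₊₁, z ↦ z + 2` of order 15.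

Each factor is given as a list of vertex-disjoint cycles. The cycle-factor conditions then become
conditions on lists, and the edge partition becomes the statement that at every vertex the
neighbour lists in the 22 factors concatenate to a permutation of its neighbourhood in
`K₄₅ − K₁₅`; both are checked by kernel computation.
-/

namespace List

theorem eq_of_mem_of_mem_of_nodup_flatMap {ι α : Type*} {s : List ι} {f : ι → List α}
    (h : (s.flatMap f).Nodup) {i j : ι} (hi : i ∈ s) (hj : j ∈ s) {x : α} (hxi : x ∈ f i)
    (hxj : x ∈ f j) : i = j := by
  by_contra hne
  have : Std.Symm (Function.onFun Disjoint f) := ⟨fun _ _ h => h.symm⟩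
  exact (nodup_flatMap.mp h).2.forall hi hj hne hxi hxj

variable {α : Type*} [DecidableEq α] {l : List α} {x : α}

theorem next_ne_self (hl : l.Nodup) (h2 : 2 ≤ l.length) (hx : x ∈ l) : l.next x hx ≠ x := by
  obtain ⟨i, hi, rfl⟩ := getElem_of_mem hx
  rw [next_getElem l hl i hi, Ne, hl.getElem_inj_iff]
  intro h
  have h1 : 1 % l.length = 0 % l.length :=
    Nat.ModEq.add_left_cancel' i (by rw [Nat.ModEq, h, Nat.add_zero, Nat.mod_eq_of_lt hi])
  rw [Nat.mod_eq_of_lt (by omega), Nat.zero_mod] at h1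
  omega

theorem prev_ne_next (hl : l.Nodup) (h3 : 3 ≤ l.length) (hx : x ∈ l) :
    l.prev x hx ≠ l.next x hx := by
  obtain ⟨i, hi, rfl⟩ := getElem_of_mem hx
  rw [next_getElem l hl i hi, prev_getElem l hl i hi, Ne, hl.getElem_inj_iff]
  intro h
  have h1 : (l.length - 1) % l.length = 1 % l.length := Nat.ModEq.add_left_cancel' i h
  rw [Nat.mod_eq_of_lt (by omega), Nat.mod_eq_of_lt (by omega)] at h1
  omega

end List

namespace SimpleGraph

variable {V : Type*} [DecidableEq V]

/-- `List.next` wraps around, so every list in `cs` is read as a cycle. -/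
def ofCycles (cs : List (List V)) : SimpleGraph V :=
  fromRel fun a b => ∃ l ∈ cs, ∃ h : a ∈ l, l.next a h = b

def cycleNeighbors (cs : List (List V)) (v : V) : List V :=
  cs.flatMap fun l => if h : v ∈ l then [l.next v h, l.prev v h] else []

variable {cs : List (List V)} {l : List V} {v w : V}

theorem mem_flatten_of_ofCycles_adj (h : (ofCycles cs).Adj v w) : v ∈ cs.flatten := by
  obtain ⟨-, ⟨l, hl, hv, -⟩ | ⟨l, hl, hw, rfl⟩⟩ := h
  · exact List.mem_flatten_of_mem hl hv
  · exact List.mem_flatten_of_mem hl (l.next_mem w hw)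

theorem ofCycles_adj_iff (hnd : cs.flatten.Nodup) (hlen : ∀ l ∈ cs, 3 ≤ l.length) (hl : l ∈ cs)
    (hv : v ∈ l) : (ofCycles cs).Adj v w ↔ w = l.next v hv ∨ w = l.prev v hv := by
  rw [← List.flatMap_id] at hnd
  have hlnd : l.Nodup := (List.nodup_flatMap.mp hnd).1 l hl
  have hl2 : 2 ≤ l.length := by have := hlen l hl; omega
  have huniq {l'} (hl' : l' ∈ cs) (hvl' : v ∈ l') : l' = l :=
    List.eq_of_mem_of_mem_of_nodup_flatMap hnd hl' hl hvl' hv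
  constructor
  · rintro ⟨-, ⟨l', hl', hvl', rfl⟩ | ⟨l', hl', hwl', rfl⟩⟩
    · obtain rfl := huniq hl' hvl'
      exact Or.inl rfl
    · obtain rfl := huniq hl' (l'.next_mem w hwl')
      exact Or.inr (l'.prev_next hlnd w hwl').symm
  · rintro (rfl | rfl)
    · exact ⟨(List.next_ne_self hlnd hl2 hv).symm, Or.inl ⟨l, hl, hv, rfl⟩⟩
    · have hp := l.prev_mem v hv
      have hne := List.next_ne_self hlnd hl2 hp
      rw [l.next_prev hlnd v hv] at hne
      exact ⟨hne, Or.inr ⟨l, hl, hp, l.next_prev hlnd v hv⟩⟩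

theorem ofCycles_adj_iff_mem_cycleNeighbors (hnd : cs.flatten.Nodup)
    (hlen : ∀ l ∈ cs, 3 ≤ l.length) : (ofCycles cs).Adj v w ↔ w ∈ cycleNeighbors cs v := by
  simp only [cycleNeighbors, List.mem_flatMap]
  constructor
  · intro h
    obtain ⟨l, hl, hv⟩ := List.mem_flatten.mp (mem_flatten_of_ofCycles_adj h)
    refine ⟨l, hl, ?_⟩
    rw [dif_pos hv]
    simpa [ofCycles_adj_iff hnd hlen hl hv] using h
  · rintro ⟨l, hl, hw⟩
    split_ifs at hw with hv
    · simpa [ofCycles_adj_iff hnd hlen hl hv] using hw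
    · simp at hw

theorem ncard_neighborSet_ofCycles (hnd : cs.flatten.Nodup) (hlen : ∀ l ∈ cs, 3 ≤ l.length)
    (hv : v ∈ cs.flatten) : ((ofCycles cs).neighborSet v).ncard = 2 := by
  obtain ⟨l, hl, hv⟩ := List.mem_flatten.mp hv
  have hlnd : l.Nodup := (List.nodup_flatten.mp hnd).1 l hl
  have : (ofCycles cs).neighborSet v = {l.next v hv, l.prev v hv} := by
    ext w
    simp [ofCycles_adj_iff hnd hlen hl hv]
  rw [this, Set.ncard_pair (List.prev_ne_next hlnd (hlen l hl) hv).symm]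

theorem neighborSet_ofCycles_eq_empty (hv : v ∉ cs.flatten) :
    (ofCycles cs).neighborSet v = ∅ :=
  Set.eq_empty_of_forall_notMem fun _ h => hv (mem_flatten_of_ofCycles_adj h)

theorem supp_connectedComponentMk_ofCycles (hnd : cs.flatten.Nodup)
    (hlen : ∀ l ∈ cs, 3 ≤ l.length) (hl : l ∈ cs) (hv : v ∈ l) :
    ((ofCycles cs).connectedComponentMk v).supp = l.toFinset := by
  have hlnd : l.Nodup := (List.nodup_flatten.mp hnd).1 l hl
  have hclosed {a b : V} (hab : (ofCycles cs).Reachable a b) (ha : a ∈ l) : b ∈ l := by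
    obtain ⟨p⟩ := hab
    induction p with
    | nil => exact ha
    | cons hadj _ ih =>
      rcases (ofCycles_adj_iff hnd hlen hl ha).mp hadj with rfl | rfl
      exacts [ih (l.next_mem _ ha), ih (l.prev_mem _ ha)]
  have hreach (i : ℕ) (hi : i < l.length) : (ofCycles cs).Reachable l[0] l[i] := by
    induction i with
    | zero => rfl
    | succ i ih =>
      refine (ih (by omega)).trans (Adj.reachable ?_)
      rw [ofCycles_adj_iff hnd hlen hl (l.getElem_mem _), l.next_getElem hlnd i (by omega)]
      exact Or.inl (by simp only [Nat.mod_eq_of_lt hi])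
  ext x
  simp only [ConnectedComponent.mem_supp_iff, ConnectedComponent.eq, List.coe_toFinset,
    Set.mem_ofPred_eq]
  refine ⟨fun h => hclosed h.symm hv, fun hx => ?_⟩
  obtain ⟨i, hi, rfl⟩ := List.getElem_of_mem hx
  obtain ⟨j, hj, rfl⟩ := List.getElem_of_mem hv
  exact (hreach i hi).symm.trans (hreach j hj)

theorem ncard_supp_connectedComponentMk_ofCycles {k : ℕ} (hnd : cs.flatten.Nodup)
    (hlen : ∀ l ∈ cs, l.length = k) (hk : 3 ≤ k) (hv : v ∈ cs.flatten) :
    ((ofCycles cs).connectedComponentMk v).supp.ncard = k := by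
  obtain ⟨l, hl, hv⟩ := List.mem_flatten.mp hv
  rw [supp_connectedComponentMk_ofCycles hnd (fun l hl => hlen l hl ▸ hk) hl hv,
    Set.ncard_coe_finset, List.toFinset_card_of_nodup ((List.nodup_flatten.mp hnd).1 l hl),
    hlen l hl]

theorem isCycleFactor_ofCycles {k : ℕ} (hnd : cs.flatten.Nodup) (hlen : ∀ l ∈ cs, l.length = k)
    (hk : 3 ≤ k) (hcover : ∀ v, v ∈ cs.flatten) : IsCycleFactor (ofCycles cs) k :=
  ⟨fun v => ncard_neighborSet_ofCycles hnd (fun l hl => hlen l hl ▸ hk) (hcover v),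
    fun v => ncard_supp_connectedComponentMk_ofCycles hnd hlen hk (hcover v)⟩

theorem isHoleyCycleFactorFin_ofCycles {n h k : ℕ} {cs : List (List (Fin n))}
    (hnd : cs.flatten.Nodup) (hlen : ∀ l ∈ cs, l.length = k) (hk : 3 ≤ k)
    (hcover : ∀ x, x ∈ cs.flatten ↔ h ≤ x.val) : IsHoleyCycleFactorFin (ofCycles cs) h k :=
  ⟨fun x hx => ncard_neighborSet_ofCycles hnd (fun l hl => hlen l hl ▸ hk) ((hcover x).2 hx),
    fun x hx => by
      rw [neighborSet_ofCycles_eq_empty fun h' => absurd ((hcover x).1 h') (by omega),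
        Set.ncard_empty],
    fun x hx => ncard_supp_connectedComponentMk_ofCycles hnd hlen hk ((hcover x).2 hx)⟩

end SimpleGraph

theorem isDecompOn_of_nodup_flatMap {V : Type*} {G : SimpleGraph V} {F : ℕ → SimpleGraph V}
    {N : ℕ} (nb : ℕ → V → List V)
    (hF : ∀ i < N, ∀ a b, (F i).Adj a b ↔ b ∈ nb i a)
    (hnd : ∀ a, ((List.range N).flatMap (nb · a)).Nodup)
    (hG : ∀ a b, G.Adj a b ↔ b ∈ (List.range N).flatMap (nb · a)) : IsDecompOn G F N := by
  have hGF (a b : V) : G.Adj a b ↔ ∃ i < N, (F i).Adj a b := by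
    simp only [hG, List.mem_flatMap, List.mem_range]
    exact exists_congr fun i => and_congr_right fun hi => (hF i hi a b).symm
  refine ⟨fun i hi a b hab => (hGF a b).2 ⟨i, hi, hab⟩, fun i hi j hj hij => ?_, ?_⟩
  · refine Set.disjoint_left.2 fun e he he' => ?_
    induction e using Sym2.ind with
    | _ a b =>
      exact hij (List.eq_of_mem_of_mem_of_nodup_flatMap (hnd a) (List.mem_range.2 hi)
        (List.mem_range.2 hj) ((hF i hi a b).1 he) ((hF j hj a b).1 he'))
  · ext e
    induction e using Sym2.ind with
    | _ a b => simp [hGF]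

instance KminusHole.instDecidableRelAdj (n h : ℕ) : DecidableRel (KminusHole n h).Adj :=
  fun a b => inferInstanceAs
    (Decidable (a ≠ b ∧ (¬(a.val < h ∧ b.val < h) ∨ ¬(b.val < h ∧ a.val < h))))

namespace IHW45

open SimpleGraph

/-- Vertex `i < 15` is the hole vertex `∞ᵢ`; vertex `15 + z` is `z ∈ ℤ/30`. -/
def hole (i : ℕ) : Fin 45 := ⟨i % 15, by omega⟩

def outer (z : ℕ) : Fin 45 := ⟨15 + z % 30, by omega⟩

def baseMatching : List (ℕ × ℕ) :=
  [(13, 28), (6, 17), (10, 23), (7, 16), (25, 26), (0, 3), (11, 24), (5, 8), (18, 19), (2, 14),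
    (15, 27), (1, 22), (21, 29), (4, 12), (9, 20)]

/-- Factor `j < 15` is `σ^j` applied to the triangles `{∞ᵢ, aᵢ, bᵢ}` read off `baseMatching`;
factors `15`–`20` are the holey triangle factors and factor `21` the holey pentagon factor. -/
def design (j : ℕ) : List (List (Fin 45)) :=
  if j < 15 then
    baseMatching.zipIdx.map fun ((a, b), i) => [hole (i + j), outer (a + 2 * j), outer (b + 2 * j)]
  else if j < 18 then
    (List.range 10).map fun k => [0, 4, 14].map fun z => outer (z + 3 * k + (j - 15))
  else if j < 21 then
    (List.range 10).map fun k => [0, 2, 7].map fun z => outer (z + 3 * k + (j - 18))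
  else (List.range 6).map fun k => [0, 6, 12, 18, 24].map fun z => outer (z + k)

theorem flatten_design_nodup : ∀ j < 22, (design j).flatten.Nodup := by
  decide +kernel

theorem length_of_mem_design : ∀ j < 22, ∀ l ∈ design j, l.length = if j < 21 then 3 else 5 := by
  decide +kernel

theorem mem_flatten_design :
    ∀ j < 22, ∀ x : Fin 45, x ∈ (design j).flatten ↔ (j < 15 ∨ 15 ≤ x.val) := by
  decide +kernel

theorem flatMap_cycleNeighbors_design_perm : ∀ a : Fin 45,
    ((List.range 22).flatMap fun j => cycleNeighbors (design j) a).Perm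
      ((List.finRange 45).filter ((KminusHole 45 15).Adj a ·)) := by
  decide +kernel

theorem isDecompOn_design : IsDecompOn (KminusHole 45 15) (fun j => ofCycles (design j)) 22 := by
  refine isDecompOn_of_nodup_flatMap (fun j => cycleNeighbors (design j))
    (fun j hj a b => ofCycles_adj_iff_mem_cycleNeighbors (flatten_design_nodup j hj) fun l hl => ?_)
    (fun a => (flatMap_cycleNeighbors_design_perm a).nodup_iff.2
      ((List.nodup_finRange 45).filter _))
    (fun a b => by simp [(flatMap_cycleNeighbors_design_perm a).mem_iff])
  rw [length_of_mem_design j hj l hl]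
  split_ifs <;> omega

theorem isCycleFactor_design {j : ℕ} (hj : j < 15) : IsCycleFactor (ofCycles (design j)) 3 :=
  isCycleFactor_ofCycles (flatten_design_nodup j (by omega))
    (fun l hl => by rw [length_of_mem_design j (by omega) l hl, if_pos (by omega)]) le_rfl
    fun x => (mem_flatten_design j (by omega) x).2 (Or.inl hj)

theorem isHoleyCycleFactorFin_design {j : ℕ} (h1 : 15 ≤ j) (h2 : j < 22) :
    IsHoleyCycleFactorFin (ofCycles (design j)) 15 (if j < 21 then 3 else 5) :=
  isHoleyCycleFactorFin_ofCycles (flatten_design_nodup j h2) (length_of_mem_design j h2)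
    (by split_ifs <;> norm_num) fun x => (mem_flatten_design j h2 x).trans (or_iff_right (by omega))

end IHW45

open IHW45 in
theorem stmt_9 : IsIHW 45 15 3 5 15 0 6 1 := by
  refine ⟨⊥, fun j => ofCycles (design j), fun _ => rfl, fun h => absurd h (by decide),
    by rw [sdiff_bot]; exact isDecompOn_design, fun j hj => isCycleFactor_design hj,
    fun j h1 h2 => by omega, fun j h1 h2 => ?_, fun j h1 h2 => ?_⟩
  · simpa [show j < 21 by omega] using isHoleyCycleFactorFin_design h1 (by omega)
  · simpa [show ¬j < 21 by omega] using isHoleyCycleFactorFin_design (by omega) h2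
end
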